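/- arXiv:1612.05476 — 5 statements merged into one kernel-verified Lean document; each statement's English description precedes it below -/
import Mathlib

section
/- Suppose the messages (Δ_j)_{j∈J} are admissible, i.e., there exists x* ∈ X minimizing both x ↦ ⟨θ, x⟩ and x ↦ ⟨θ + ∑_{j∈J} A_jᵀ Δ_j, x⟩ over X, and for every j ∈ J and every coordinate s, Δ_j(s) ≥ 0 whenever ν_j(s) = 1 and Δ_j(s) ≤ 0 whenever ν_j(s) = 0, where ν_j := A_j x*. Then the dual value does not decrease: D(0) ≤ D(Δ). -/
open Matrix

lemma dot_swap' {n p : Type*} [Fintype n] [Fintype p]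
    (M : Matrix n p ℝ) (v : n → ℝ) (x : p → ℝ) :
    ∑ i, (Mᵀ).mulVec v i * x i = ∑ k, v k * M.mulVec x k := by
  have h : Mᵀ.mulVec v ⬝ᵥ x = v ⬝ᵥ M.mulVec x := by
    rw [Matrix.mulVec_transpose, ← Matrix.dotProduct_mulVec]
  simpa [dotProduct] using h


/-- Lemma 1 of the paper: admissible messages do not decrease the Lagrangean dual value.
The central factor has finite nonempty set `X ⊆ {0,1}^m` with cost `θ`; each neighboring
factor `j ∈ J` has finite nonempty set `Y j ⊆ {0,1}^{mj j}` with cost `θj j`, coupled through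
binary matrices `A j` and `B j` which map elements of `X` resp. `Y j` to binary vectors.
The dual value is
`D(Δ) = min_{x∈X} ⟨θ + ∑_j A_jᵀ Δ_j, x⟩ + ∑_j min_{y∈Y_j} ⟨θ_j − B_jᵀ Δ_j, y⟩`.
If there is `x* ∈ X` minimizing both `⟨θ, ·⟩` and `⟨θ + ∑_j A_jᵀ Δ_j, ·⟩` over `X`, and
`Δ_j(k) ≥ 0` whenever `(A_j x*)(k) = 1` and `Δ_j(k) ≤ 0` whenever `(A_j x*)(k) = 0`,
then `D(0) ≤ D(Δ)`. -/
theorem admissible_messages_dual_monotone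
    {m : ℕ} {J : Type*} [Fintype J] (mj Kj : J → ℕ)
    (X : Finset (Fin m → ℝ)) (hXne : X.Nonempty)
    (hXbin : ∀ x ∈ X, ∀ i, x i = 0 ∨ x i = 1)
    (Y : ∀ j : J, Finset (Fin (mj j) → ℝ)) (hYne : ∀ j, (Y j).Nonempty)
    (hYbin : ∀ j, ∀ y ∈ Y j, ∀ i, y i = 0 ∨ y i = 1)
    (A : ∀ j : J, Matrix (Fin (Kj j)) (Fin m) ℝ)
    (B : ∀ j : J, Matrix (Fin (Kj j)) (Fin (mj j)) ℝ)
    (hAent : ∀ j k i, A j k i = 0 ∨ A j k i = 1)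
    (hBent : ∀ j k i, B j k i = 0 ∨ B j k i = 1)
    (hAbin : ∀ j, ∀ x ∈ X, ∀ k, (A j).mulVec x k = 0 ∨ (A j).mulVec x k = 1)
    (hBbin : ∀ j, ∀ y ∈ Y j, ∀ k, (B j).mulVec y k = 0 ∨ (B j).mulVec y k = 1)
    (θ : Fin m → ℝ) (θj : ∀ j : J, Fin (mj j) → ℝ)
    (D : (∀ j : J, Fin (Kj j) → ℝ) → ℝ)
    (hD : ∀ Δ' : ∀ j : J, Fin (Kj j) → ℝ,
      D Δ' = X.inf' hXne
          (fun x => ∑ i, (θ i + ∑ j, ((A j)ᵀ).mulVec (Δ' j) i) * x i)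
        + ∑ j, (Y j).inf' (hYne j)
            (fun y => ∑ i, (θj j i - ((B j)ᵀ).mulVec (Δ' j) i) * y i))
    (Δ : ∀ j : J, Fin (Kj j) → ℝ)
    (xstar : Fin m → ℝ) (hxstar : xstar ∈ X)
    (hmin : ∀ x ∈ X, ∑ i, θ i * xstar i ≤ ∑ i, θ i * x i)
    (hminΔ : ∀ x ∈ X,
      ∑ i, (θ i + ∑ j, ((A j)ᵀ).mulVec (Δ j) i) * xstar i ≤
      ∑ i, (θ i + ∑ j, ((A j)ᵀ).mulVec (Δ j) i) * x i)
    (hsign : ∀ j k, ((A j).mulVec xstar k = 1 → 0 ≤ Δ j k) ∧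
                    ((A j).mulVec xstar k = 0 → Δ j k ≤ 0)) :
    D 0 ≤ D Δ := by
  classical
  have key : ∀ j k, ∀ y ∈ Y j, Δ j k * (B j).mulVec y k ≤ Δ j k * (A j).mulVec xstar k := by
    intro j k y hy
    rcases hAbin j xstar hxstar k with hν | hν
    · rcases hBbin j y hy k with hb | hb
      · rw [hν, hb]
      · have := (hsign j k).2 hν; rw [hν, hb]; nlinarith
    · rcases hBbin j y hy k with hb | hb
      · have := (hsign j k).1 hν; rw [hν, hb]; nlinarith
      · rw [hν, hb]
  have h1 : X.inf' hXne (fun x => ∑ i, (θ i + ∑ j, ((A j)ᵀ).mulVec (Δ j) i) * x i)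
      = ∑ i, θ i * xstar i + ∑ j, ∑ k, Δ j k * (A j).mulVec xstar k := by
    have he : X.inf' hXne (fun x => ∑ i, (θ i + ∑ j, ((A j)ᵀ).mulVec (Δ j) i) * x i)
        = ∑ i, (θ i + ∑ j, ((A j)ᵀ).mulVec (Δ j) i) * xstar i :=
      le_antisymm (Finset.inf'_le _ hxstar) (Finset.le_inf' _ _ hminΔ)
    rw [he]
    simp only [add_mul, Finset.sum_mul]
    rw [Finset.sum_add_distrib]
    congr 1
    rw [Finset.sum_comm]
    exact Finset.sum_congr rfl fun j _ => dot_swap' _ _ _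
  have h2 : ∀ j, (Y j).inf' (hYne j) (fun y => ∑ i, θj j i * y i)
      ≤ ∑ k, Δ j k * (A j).mulVec xstar k
        + (Y j).inf' (hYne j) (fun y => ∑ i, (θj j i - ((B j)ᵀ).mulVec (Δ j) i) * y i) := by
    intro j
    obtain ⟨y, hy, hyeq⟩ := Finset.exists_mem_eq_inf' (hYne j)
      (fun y => ∑ i, (θj j i - ((B j)ᵀ).mulVec (Δ j) i) * y i)
    rw [hyeq]
    have e1 : ∑ i, θj j i * y i
        = ∑ i, (θj j i - ((B j)ᵀ).mulVec (Δ j) i) * y i + ∑ k, Δ j k * (B j).mulVec y k := by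
      rw [← dot_swap']
      simp [sub_mul, Finset.sum_sub_distrib]
    calc (Y j).inf' (hYne j) (fun y => ∑ i, θj j i * y i) ≤ ∑ i, θj j i * y i :=
          Finset.inf'_le _ hy
      _ = ∑ i, (θj j i - ((B j)ᵀ).mulVec (Δ j) i) * y i + ∑ k, Δ j k * (B j).mulVec y k := e1
      _ ≤ ∑ k, Δ j k * (A j).mulVec xstar k
          + ∑ i, (θj j i - ((B j)ᵀ).mulVec (Δ j) i) * y i := by
          have hs : ∑ k, Δ j k * (B j).mulVec y k ≤ ∑ k, Δ j k * (A j).mulVec xstar k :=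
            Finset.sum_le_sum fun k _ => key j k y hy
          linarith
  rw [hD 0, hD Δ]
  simp only [Pi.zero_apply, Matrix.mulVec_zero, Finset.sum_const_zero, add_zero, sub_zero]
  rw [h1]
  have hx0 : X.inf' hXne (fun x => ∑ i, θ i * x i) ≤ ∑ i, θ i * xstar i :=
    Finset.inf'_le _ hxstar
  have hsum := Finset.sum_le_sum (fun j (_ : j ∈ Finset.univ) => h2 j)
  rw [Finset.sum_add_distrib] at hsum
  linarith
end

section
/- Let L be a finite set, S, T ⊆ L, and p : S → ℝ≥0, q : T → ℝ≥0 with ∑_{s∈S} p(s) = 1 and ∑_{t∈T} q(t) = 1. If p(x) + q(x) ≤ 1 for every x ∈ S ∩ T, then there exists μ : S × T → ℝ≥0 with row marginals ∑_{t∈T} μ(s,t) = p(s) for all s ∈ S, column marginals ∑_{s∈S} μ(s,t) = q(t) for all t ∈ T, and zero diagonal μ(x,x) = 0 for every x ∈ S ∩ T. -/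
section Aux
variable {L : Type*} [DecidableEq L]

/-- Tight case: if `p z + q z = M` for some `z ∈ V`, there is an explicit solution. -/
lemma coupling_tight (V : Finset L) (p q : L → ℝ) (M : ℝ) (z : L) (hz : z ∈ V)
    (hp0 : ∀ s ∈ V, 0 ≤ p s) (hq0 : ∀ t ∈ V, 0 ≤ q t)
    (hps : ∑ s ∈ V, p s = M) (hqs : ∑ t ∈ V, q t = M)
    (ht : p z + q z = M) :
    ∃ μ : L → L → ℝ,
      (∀ s ∈ V, ∀ t ∈ V, 0 ≤ μ s t) ∧
      (∀ s ∈ V, ∑ t ∈ V, μ s t = p s) ∧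
      (∀ t ∈ V, ∑ s ∈ V, μ s t = q t) ∧
      (∀ x ∈ V, μ x x = 0) := by
  refine ⟨fun s t => if s = z then (if t = z then 0 else q t)
      else (if t = z then p s else 0), ?_, ?_, ?_, ?_⟩
  · intro s hs t htV
    dsimp only
    by_cases h1 : s = z <;> by_cases h2 : t = z <;>
      simp [h1, h2, hp0 s hs, hq0 t htV]
  · intro s hs
    dsimp only
    by_cases h1 : s = z
    · simp only [if_pos h1]
      have e1 : ∑ t ∈ V, (if t = z then (0:ℝ) else q t)
          = ∑ t ∈ V.erase z, (if t = z then (0:ℝ) else q t) :=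
        (Finset.sum_erase V (by simp)).symm
      have e2 : ∑ t ∈ V.erase z, (if t = z then (0:ℝ) else q t)
          = ∑ t ∈ V.erase z, q t :=
        Finset.sum_congr rfl (fun t htE => by rw [if_neg (Finset.mem_erase.1 htE).1])
      rw [e1, e2, Finset.sum_erase_eq_sub hz, hqs, h1]
      linarith
    · simp only [if_neg h1]
      rw [Finset.sum_ite_eq' V z (fun _ => p s), if_pos hz]
  · intro t htV
    dsimp only
    by_cases h2 : t = z
    · have e0 : ∀ s, (if s = z then (if t = z then (0:ℝ) else q t)
          else (if t = z then p s else 0)) = (if s = z then 0 else p s) := by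
        intro s; by_cases h : s = z <;> simp [h, h2]
      rw [Finset.sum_congr rfl (fun s _ => e0 s)]
      have e1 : ∑ s ∈ V, (if s = z then (0:ℝ) else p s)
          = ∑ s ∈ V.erase z, (if s = z then (0:ℝ) else p s) :=
        (Finset.sum_erase V (by simp)).symm
      have e2 : ∑ s ∈ V.erase z, (if s = z then (0:ℝ) else p s)
          = ∑ s ∈ V.erase z, p s :=
        Finset.sum_congr rfl (fun s hsE => by rw [if_neg (Finset.mem_erase.1 hsE).1])
      rw [e1, e2, Finset.sum_erase_eq_sub hz, hps, h2]
      linarith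
    · have e0 : ∀ s, (if s = z then (if t = z then (0:ℝ) else q t)
          else (if t = z then p s else 0)) = (if s = z then q t else 0) := by
        intro s; by_cases h : s = z <;> simp [h, h2]
      rw [Finset.sum_congr rfl (fun s _ => e0 s)]
      rw [Finset.sum_ite_eq' V z (fun _ => q t), if_pos hz]
  · intro x _
    dsimp only
    by_cases h : x = z <;> simp [h]

/-- Combining: a solution for the reduced pair plus mass `ε` at `(x, y)`. -/
lemma coupling_add (V : Finset L) (p q : L → ℝ) (x y : L) (hx : x ∈ V) (hy : y ∈ V)
    (hxy : x ≠ y) (ε : ℝ) (hε : 0 ≤ ε) (μ' : L → L → ℝ)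
    (h1 : ∀ s ∈ V, ∀ t ∈ V, 0 ≤ μ' s t)
    (h2 : ∀ s ∈ V, ∑ t ∈ V, μ' s t = p s - (if s = x then ε else 0))
    (h3 : ∀ t ∈ V, ∑ s ∈ V, μ' s t = q t - (if t = y then ε else 0))
    (h4 : ∀ z ∈ V, μ' z z = 0) :
    ∃ μ : L → L → ℝ,
      (∀ s ∈ V, ∀ t ∈ V, 0 ≤ μ s t) ∧
      (∀ s ∈ V, ∑ t ∈ V, μ s t = p s) ∧
      (∀ t ∈ V, ∑ s ∈ V, μ s t = q t) ∧
      (∀ z ∈ V, μ z z = 0) := by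
  refine ⟨fun s t => μ' s t + (if s = x ∧ t = y then ε else 0), ?_, ?_, ?_, ?_⟩
  · intro s hs t htV
    have h0 := h1 s hs t htV
    dsimp only
    by_cases h : s = x ∧ t = y
    · rw [if_pos h]; linarith
    · rw [if_neg h]; linarith
  · intro s hs
    rw [Finset.sum_add_distrib, h2 s hs]
    have : ∑ t ∈ V, (if s = x ∧ t = y then ε else 0)
        = if s = x then ε else 0 := by
      by_cases h : s = x
      · have e : ∀ t, (if s = x ∧ t = y then ε else 0) = (if t = y then ε else 0) :=
          fun t => by simp [h]
        rw [Finset.sum_congr rfl fun t _ => e t,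
          Finset.sum_ite_eq' V y (fun _ => ε), if_pos hy, if_pos h]
      · simp [h]
    rw [this]; ring
  · intro t htV
    rw [Finset.sum_add_distrib, h3 t htV]
    have : ∑ s ∈ V, (if s = x ∧ t = y then ε else 0)
        = if t = y then ε else 0 := by
      by_cases h : t = y
      · have e : ∀ s, (if s = x ∧ t = y then ε else 0) = (if s = x then ε else 0) :=
          fun s => by simp [h]
        rw [Finset.sum_congr rfl fun s _ => e s,
          Finset.sum_ite_eq' V x (fun _ => ε), if_pos hx, if_pos h]
      · simp [h]
    rw [this]; ring
  · intro z hzV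
    have : ¬ (z = x ∧ z = y) := by
      rintro ⟨rfl, rfl⟩; exact hxy rfl
    simp [h4 z hzV, this]

/-- Main inductive lemma. -/
lemma coupling_main :
    ∀ (n : ℕ) (V : Finset L) (p q : L → ℝ) (M : ℝ),
      (V.filter fun z => p z ≠ 0).card + (V.filter fun z => q z ≠ 0).card ≤ n →
      (∀ z ∈ V, 0 ≤ p z) → (∀ z ∈ V, 0 ≤ q z) →
      ∑ z ∈ V, p z = M → ∑ z ∈ V, q z = M →
      (∀ z ∈ V, p z + q z ≤ M) →
      ∃ μ : L → L → ℝ,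
        (∀ s ∈ V, ∀ t ∈ V, 0 ≤ μ s t) ∧
        (∀ s ∈ V, ∑ t ∈ V, μ s t = p s) ∧
        (∀ t ∈ V, ∑ s ∈ V, μ s t = q t) ∧
        (∀ z ∈ V, μ z z = 0) := by
  intro n
  induction n with
  | zero =>
    intro V p q M hn hp0 hq0 hps hqs _
    have hpfilter : (V.filter fun z => p z ≠ 0) = ∅ := by
      rw [← Finset.card_eq_zero]; omega
    have hp : ∀ z ∈ V, p z = 0 := by
      intro z hzV
      by_contra h
      have : z ∈ V.filter fun z => p z ≠ 0 := Finset.mem_filter.2 ⟨hzV, h⟩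
      simp [hpfilter] at this
    have hM : M = 0 := by
      rw [← hps]; exact Finset.sum_eq_zero hp
    have hq : ∀ z ∈ V, q z = 0 := by
      have := (Finset.sum_eq_zero_iff_of_nonneg hq0).1 (by rw [hqs, hM])
      exact this
    refine ⟨fun _ _ => 0, by intros; exact le_refl 0, ?_, ?_, by intros; rfl⟩
    · intro s hs; simp [hp s hs]
    · intro t htV; simp [hq t htV]
  | succ n ih =>
    intro V p q M hn hp0 hq0 hps hqs hle
    -- M ≥ 0
    have hM0 : 0 ≤ M := by
      rw [← hps]; exact Finset.sum_nonneg hp0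
    rcases eq_or_lt_of_le hM0 with hM | hM
    · -- M = 0
      have hp : ∀ z ∈ V, p z = 0 :=
        (Finset.sum_eq_zero_iff_of_nonneg hp0).1 (by rw [hps, ← hM])
      have hq : ∀ z ∈ V, q z = 0 :=
        (Finset.sum_eq_zero_iff_of_nonneg hq0).1 (by rw [hqs, ← hM])
      refine ⟨fun _ _ => 0, by intros; exact le_refl 0, ?_, ?_, by intros; rfl⟩
      · intro s hs; simp [hp s hs]
      · intro t htV; simp [hq t htV]
    -- M > 0
    by_cases htight : ∃ z ∈ V, p z + q z = M
    · obtain ⟨z, hz, htz⟩ := htight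
      exact coupling_tight V p q M z hz hp0 hq0 hps hqs htz
    push_neg at htight
    have hstrict : ∀ z ∈ V, p z + q z < M := fun z hz =>
      lt_of_le_of_ne (hle z hz) (htight z hz)
    -- find x with p x > 0
    have hx : ∃ x ∈ V, 0 < p x := by
      by_contra h
      push_neg at h
      have : ∑ z ∈ V, p z ≤ 0 := Finset.sum_nonpos h
      linarith [hps ▸ this]
    obtain ⟨x, hxV, hpx⟩ := hx
    -- find y ≠ x with q y > 0
    have hqx : q x < M := by
      have := hstrict x hxV; linarith
    have hsumerase : ∑ z ∈ V.erase x, q z = M - q x := by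
      rw [Finset.sum_erase_eq_sub hxV, hqs]
    have hy : ∃ y ∈ V.erase x, 0 < q y := by
      by_contra h
      push_neg at h
      have : ∑ z ∈ V.erase x, q z ≤ 0 := Finset.sum_nonpos h
      rw [hsumerase] at this
      linarith
    obtain ⟨y, hyE, hqy⟩ := hy
    obtain ⟨hyx, hyV⟩ := Finset.mem_erase.1 hyE
    have hxy : x ≠ y := fun h => hyx h.symm
    set ε0 : ℝ := min (p x) (q y) with hε0def
    have hε0pos : 0 < ε0 := lt_min hpx hqy
    have hε0px : ε0 ≤ p x := min_le_left _ _
    have hε0qy : ε0 ≤ q y := min_le_right _ _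
    by_cases hbig : ∃ z ∈ V, z ≠ x ∧ z ≠ y ∧ M - ε0 < p z + q z
    · -- case (ii): reduce by ε = M - (p z* + q z*) and hit the tight case
      obtain ⟨z, hzV, hzx, hzy, hzb⟩ := hbig
      set ε : ℝ := M - (p z + q z) with hεdef
      have hεpos : 0 < ε := by
        have := hstrict z hzV; simp only [hεdef]; linarith
      have hεlt : ε < ε0 := by simp only [hεdef]; linarith
      set p' : L → ℝ := fun w => p w - (if w = x then ε else 0) with hp'def
      set q' : L → ℝ := fun w => q w - (if w = y then ε else 0) with hq'def
      have hp'0 : ∀ w ∈ V, 0 ≤ p' w := by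
        intro w hw; simp only [hp'def]
        by_cases h : w = x
        · rw [if_pos h, h]; linarith
        · rw [if_neg h]; linarith [hp0 w hw]
      have hq'0 : ∀ w ∈ V, 0 ≤ q' w := by
        intro w hw; simp only [hq'def]
        by_cases h : w = y
        · rw [if_pos h, h]; linarith
        · rw [if_neg h]; linarith [hq0 w hw]
      have hp's : ∑ w ∈ V, p' w = M - ε := by
        simp only [hp'def]
        rw [Finset.sum_sub_distrib, hps, Finset.sum_ite_eq' V x (fun _ => ε), if_pos hxV]
      have hq's : ∑ w ∈ V, q' w = M - ε := by
        simp only [hq'def]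
        rw [Finset.sum_sub_distrib, hqs, Finset.sum_ite_eq' V y (fun _ => ε), if_pos hyV]
      have htz : p' z + q' z = M - ε := by
        simp only [hp'def, hq'def, if_neg hzx, if_neg hzy, hεdef]; ring
      obtain ⟨μ', h1, h2, h3, h4⟩ :=
        coupling_tight V p' q' (M - ε) z hzV hp'0 hq'0 hp's hq's htz
      exact coupling_add V p q x y hxV hyV hxy ε (le_of_lt hεpos) μ' h1 h2 h3 h4
    · -- case (i): reduce by ε0; support shrinks, use IH
      push_neg at hbig
      set p' : L → ℝ := fun w => p w - (if w = x then ε0 else 0) with hp'def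
      set q' : L → ℝ := fun w => q w - (if w = y then ε0 else 0) with hq'def
      have hp'0 : ∀ w ∈ V, 0 ≤ p' w := by
        intro w hw; simp only [hp'def]
        by_cases h : w = x
        · rw [if_pos h, h]; linarith
        · rw [if_neg h]; linarith [hp0 w hw]
      have hq'0 : ∀ w ∈ V, 0 ≤ q' w := by
        intro w hw; simp only [hq'def]
        by_cases h : w = y
        · rw [if_pos h, h]; linarith
        · rw [if_neg h]; linarith [hq0 w hw]
      have hp's : ∑ w ∈ V, p' w = M - ε0 := by
        simp only [hp'def]
        rw [Finset.sum_sub_distrib, hps, Finset.sum_ite_eq' V x (fun _ => ε0), if_pos hxV]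
      have hq's : ∑ w ∈ V, q' w = M - ε0 := by
        simp only [hq'def]
        rw [Finset.sum_sub_distrib, hqs, Finset.sum_ite_eq' V y (fun _ => ε0), if_pos hyV]
      have hle' : ∀ w ∈ V, p' w + q' w ≤ M - ε0 := by
        intro w hw
        by_cases h : w = x
        · subst h
          simp only [hp'def, hq'def]
          rw [if_neg hxy]; simp only [eq_self_iff_true, if_true]
          linarith [hle w hw]
        by_cases h' : w = y
        · subst h'
          simp only [hp'def, hq'def]
          rw [if_neg h]; simp only [eq_self_iff_true, if_true]
          linarith [hle w hw]
        · simp only [hp'def, hq'def, if_neg h, if_neg h']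
          linarith [hbig w hw h h']
      -- support subset facts
      have hqsub : (V.filter fun w => q' w ≠ 0) ⊆ (V.filter fun w => q w ≠ 0) := by
        intro w hw
        obtain ⟨hwV, hw0⟩ := Finset.mem_filter.1 hw
        refine Finset.mem_filter.2 ⟨hwV, ?_⟩
        by_cases h : w = y
        · subst h; intro h0; rw [h0] at hε0qy; linarith
        · simp only [hq'def, if_neg h, sub_zero] at hw0; exact hw0
      have hpsub : (V.filter fun w => p' w ≠ 0) ⊆ (V.filter fun w => p w ≠ 0) := by
        intro w hw
        obtain ⟨hwV, hw0⟩ := Finset.mem_filter.1 hw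
        refine Finset.mem_filter.2 ⟨hwV, ?_⟩
        by_cases h : w = x
        · subst h; intro h0; rw [h0] at hε0px; linarith
        · simp only [hp'def, if_neg h, sub_zero] at hw0; exact hw0
      have hcard : (V.filter fun w => p' w ≠ 0).card + (V.filter fun w => q' w ≠ 0).card ≤ n := by
        rcases min_cases (p x) (q y) with ⟨hmin, _⟩ | ⟨hmin, _⟩
        · -- ε0 = p x, so p' x = 0
          have hp'x : p' x = 0 := by
            simp only [hp'def]; simp only [eq_self_iff_true, if_true]; rw [hε0def, hmin]; ring
          have hsub2 : (V.filter fun w => p' w ≠ 0) ⊆ ((V.filter fun w => p w ≠ 0).erase x) := by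
            intro w hw
            obtain ⟨hwV, hw0⟩ := Finset.mem_filter.1 hw
            refine Finset.mem_erase.2 ⟨?_, hpsub hw⟩
            intro h; subst h; exact hw0 hp'x
          have hxmem : x ∈ V.filter fun w => p w ≠ 0 :=
            Finset.mem_filter.2 ⟨hxV, by intro h; rw [h] at hpx; linarith⟩
          have h1 := Finset.card_le_card hsub2
          have h2 := Finset.card_le_card hqsub
          rw [Finset.card_erase_of_mem hxmem] at h1
          have hxpos : 1 ≤ (V.filter fun w => p w ≠ 0).card :=
            Finset.card_pos.2 ⟨x, hxmem⟩ 
          omega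
        · -- ε0 = q y, so q' y = 0
          have hq'y : q' y = 0 := by
            simp only [hq'def]; simp only [eq_self_iff_true, if_true]; rw [hε0def, hmin]; ring
          have hsub2 : (V.filter fun w => q' w ≠ 0) ⊆ ((V.filter fun w => q w ≠ 0).erase y) := by
            intro w hw
            obtain ⟨hwV, hw0⟩ := Finset.mem_filter.1 hw
            refine Finset.mem_erase.2 ⟨?_, hqsub hw⟩
            intro h; subst h; exact hw0 hq'y
          have hymem : y ∈ V.filter fun w => q w ≠ 0 :=
            Finset.mem_filter.2 ⟨hyV, by intro h; rw [h] at hqy; linarith⟩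
          have h1 := Finset.card_le_card hsub2
          have h2 := Finset.card_le_card hpsub
          rw [Finset.card_erase_of_mem hymem] at h1
          have hypos : 1 ≤ (V.filter fun w => q w ≠ 0).card :=
            Finset.card_pos.2 ⟨y, hymem⟩
          omega
      obtain ⟨μ', h1, h2, h3, h4⟩ :=
        ih V p' q' (M - ε0) hcard hp'0 hq'0 hp's hq's hle'
      exact coupling_add V p q x y hxV hyV hxy ε0 (le_of_lt hε0pos) μ' h1 h2 h3 h4

end Aux

/-- Coupling lemma: given distributions `p` on `S` and `q` on `T` with
`p(x) + q(x) ≤ 1` for every shared label `x ∈ S ∩ T`, there is a nonnegative joint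
distribution `μ` on `S × T` with marginals `p` and `q` vanishing on the diagonal. -/
theorem coupling_avoiding_diagonal {L : Type*} [DecidableEq L]
    (S T : Finset L) (p q : L → ℝ)
    (hp0 : ∀ s ∈ S, 0 ≤ p s) (hp1 : ∑ s ∈ S, p s = 1)
    (hq0 : ∀ t ∈ T, 0 ≤ q t) (hq1 : ∑ t ∈ T, q t = 1)
    (hpq : ∀ x ∈ S ∩ T, p x + q x ≤ 1) :
    ∃ μ : L → L → ℝ,
      (∀ s ∈ S, ∀ t ∈ T, 0 ≤ μ s t) ∧
      (∀ s ∈ S, ∑ t ∈ T, μ s t = p s) ∧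
      (∀ t ∈ T, ∑ s ∈ S, μ s t = q t) ∧
      (∀ x ∈ S ∩ T, μ x x = 0) := by
  classical
  set V : Finset L := S ∪ T with hVdef
  set p' : L → ℝ := fun x => if x ∈ S then p x else 0 with hp'def
  set q' : L → ℝ := fun x => if x ∈ T then q x else 0 with hq'def
  have hSsub : S ⊆ V := Finset.subset_union_left
  have hTsub : T ⊆ V := Finset.subset_union_right
  have hp'0 : ∀ z ∈ V, 0 ≤ p' z := by
    intro z _; simp only [hp'def]
    by_cases h : z ∈ S
    · simp [h, hp0 z h]
    · simp [h]
  have hq'0 : ∀ z ∈ V, 0 ≤ q' z := by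
    intro z _; simp only [hq'def]
    by_cases h : z ∈ T
    · simp [h, hq0 z h]
    · simp [h]
  have hp's : ∑ z ∈ V, p' z = 1 := by
    simp only [hp'def]
    rw [Finset.sum_ite_mem, Finset.union_inter_cancel_left, hp1]
  have hq's : ∑ z ∈ V, q' z = 1 := by
    simp only [hq'def]
    rw [Finset.sum_ite_mem, Finset.union_inter_cancel_right, hq1]
  have hle : ∀ z ∈ V, p' z + q' z ≤ 1 := by
    intro z hzV
    by_cases hzS : z ∈ S <;> by_cases hzT : z ∈ T
    · have := hpq z (Finset.mem_inter.2 ⟨hzS, hzT⟩)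
      simp only [hp'def, hq'def, if_pos hzS, if_pos hzT]
      exact this
    · simp only [hp'def, hq'def, if_pos hzS, if_neg hzT, add_zero]
      calc p z ≤ ∑ s ∈ S, p s := Finset.single_le_sum hp0 hzS
        _ = 1 := hp1
    · simp only [hp'def, hq'def, if_neg hzS, if_pos hzT, zero_add]
      calc q z ≤ ∑ t ∈ T, q t := Finset.single_le_sum hq0 hzT
        _ = 1 := hq1
    · simp only [hp'def, hq'def, if_neg hzS, if_neg hzT]; norm_num
  obtain ⟨μ, h1, h2, h3, h4⟩ :=
    coupling_main ((V.filter fun z => p' z ≠ 0).card + (V.filter fun z => q' z ≠ 0).card)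
      V p' q' 1 (le_refl _) hp'0 hq'0 hp's hq's hle
  -- rows outside S are zero, columns outside T are zero
  have hrow0 : ∀ s ∈ V, s ∉ S → ∀ t ∈ V, μ s t = 0 := by
    intro s hsV hsS t htV
    have hsum : ∑ t ∈ V, μ s t = 0 := by
      rw [h2 s hsV]; simp [hp'def, hsS]
    exact (Finset.sum_eq_zero_iff_of_nonneg (fun t htV => h1 s hsV t htV)).1 hsum t htV
  have hcol0 : ∀ t ∈ V, t ∉ T → ∀ s ∈ V, μ s t = 0 := by
    intro t htV htT s hsV
    have hsum : ∑ s ∈ V, μ s t = 0 := by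
      rw [h3 t htV]; simp [hq'def, htT]
    exact (Finset.sum_eq_zero_iff_of_nonneg (fun s hsV => h1 s hsV t htV)).1 hsum s hsV
  refine ⟨μ, ?_, ?_, ?_, ?_⟩
  · intro s hs t htT
    exact h1 s (hSsub hs) t (hTsub htT)
  · intro s hs
    have : ∑ t ∈ T, μ s t = ∑ t ∈ V, μ s t := by
      apply Finset.sum_subset hTsub
      intro t htV htT
      exact hcol0 t htV htT s (hSsub hs)
    rw [this, h2 s (hSsub hs)]
    simp [hp'def, hs]
  · intro t htT
    have : ∑ s ∈ S, μ s t = ∑ s ∈ V, μ s t := by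
      apply Finset.sum_subset hSsub
      intro s hsV hsS
      exact hrow0 s hsV hsS t (hTsub htT)
    rw [this, h3 t (hTsub htT)]
    simp [hq'def, htT]
  · intro x hx
    obtain ⟨hxS, _⟩ := Finset.mem_inter.1 hx
    exact h4 x (hSsub hxS)
end

section
/- Every μ in the constrained (R2/R3) feasible set extends, by choosing suitable pairwise marginals μ_{uv} : X_u × X_v → ℝ≥0 for the new edges uv ∈ Ê∖E (with marginals μ_u, μ_v and μ_{uv}(s,s) = 0 for all s ∈ X_u ∩ X_v), to a point of the (R1) feasible set with the same objective value F̂(μ) = F(μ); consequently the optimal value of relaxation (R1) is at most that of relaxation (R2), i.e., relaxation (R1) is weaker. (This is the part of Proposition 1 asserting that (R1) is weaker than (R2) and (R3).) -/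
/-- The local polytope `L_G` of a (directed representation of a) graph with node set `V`,
edge set `E ⊆ V × V`, and label sets `X u ⊆ L`. -/
def LocalPolytope {V L : Type*} (X : V → Finset L) (E : Finset (V × V))
    (μ1 : V → L → ℝ) (μ2 : V × V → L → L → ℝ) : Prop :=
  (∀ u : V, ∀ s ∈ X u, 0 ≤ μ1 u s) ∧
  (∀ u : V, ∑ s ∈ X u, μ1 u s = 1) ∧
  (∀ e ∈ E, ∀ s ∈ X e.1, ∀ t ∈ X e.2, 0 ≤ μ2 e s t) ∧
  (∀ e ∈ E, ∑ s ∈ X e.1, ∑ t ∈ X e.2, μ2 e s t = 1) ∧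
  (∀ e ∈ E, ∀ s ∈ X e.1, ∑ t ∈ X e.2, μ2 e s t = μ1 e.1 s) ∧
  (∀ e ∈ E, ∀ t ∈ X e.2, ∑ s ∈ X e.1, μ2 e s t = μ1 e.2 t)

/-- The LP objective `F(μ) = ∑_u ⟨θ_u, μ_u⟩ + ∑_{uv ∈ E} ⟨θ_{uv}, μ_{uv}⟩`. -/
def LPObjective {V L : Type*} [Fintype V] (X : V → Finset L) (E : Finset (V × V))
    (θ1 : V → L → ℝ) (θ2 : V × V → L → L → ℝ)
    (μ1 : V → L → ℝ) (μ2 : V × V → L → L → ℝ) : ℝ :=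
  (∑ u : V, ∑ s ∈ X u, θ1 u s * μ1 u s) +
  ∑ e ∈ E, ∑ s ∈ X e.1, ∑ t ∈ X e.2, θ2 e s t * μ2 e s t



private lemma clamp_diff (p q x : ℝ) (hp : 0 ≤ p) (hpq : p ≤ q) :
    max p (min q x) - p = min q (max 0 x) - min p (max 0 x) := by
  rcases le_total x 0 with h0|h0 <;> rcases le_total x p with h1|h1 <;>
    rcases le_total x q with h2|h2 <;>
    simp only [min_def, max_def] <;> split_ifs <;> linarith

private lemma clamp_sum (x : ℝ) (h0 : 0 ≤ x) (h2 : x ≤ 2) :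
    min 1 (max 0 x) + min 1 (max 0 (x - 1)) = x := by
  rcases le_total x 1 with h|h <;>
    simp only [min_def, max_def] <;> split_ifs <;> linarith

private lemma coupling_nat (n : ℕ) (a b : ℕ → ℝ)
    (ha : ∀ i < n, 0 ≤ a i) (hb : ∀ i < n, 0 ≤ b i)
    (hsa : ∑ i ∈ Finset.range n, a i = 1) (hsb : ∑ i ∈ Finset.range n, b i = 1)
    (hab : ∀ i < n, a i + b i ≤ 1) :
    ∃ μ : ℕ → ℕ → ℝ,
      (∀ i < n, ∀ j < n, 0 ≤ μ i j) ∧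
      (∀ i < n, ∑ j ∈ Finset.range n, μ i j = a i) ∧
      (∀ j < n, ∑ i ∈ Finset.range n, μ i j = b j) ∧
      (∀ i < n, μ i i = 0) := by
  have hn : 0 < n := by
    rcases Nat.eq_zero_or_pos n with h|h
    · exfalso; rw [h, Finset.sum_range_zero] at hsa; norm_num at hsa
    · exact h
  set A : ℕ → ℝ := fun k => ∑ i ∈ Finset.range k, a i with hA
  set B : ℕ → ℝ := fun k => ∑ i ∈ Finset.range k, b i with hB
  have hA0 : A 0 = 0 := Finset.sum_range_zero a
  have hB0 : B 0 = 0 := Finset.sum_range_zero b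
  have hAn : A n = 1 := hsa
  have hBn : B n = 1 := hsb
  have hAstep : ∀ k, A (k + 1) = A k + a k := fun k => Finset.sum_range_succ a k
  have hBstep : ∀ k, B (k + 1) = B k + b k := fun k => Finset.sum_range_succ b k
  have hAmono : ∀ k l, k ≤ l → l ≤ n → A k ≤ A l := by
    intro k l hkl hln
    apply Finset.sum_le_sum_of_subset_of_nonneg (Finset.range_subset_range.2 hkl)
    intro i hi _
    exact ha i (lt_of_lt_of_le (Finset.mem_range.1 hi) hln)
  have hBmono : ∀ k l, k ≤ l → l ≤ n → B k ≤ B l := by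
    intro k l hkl hln
    apply Finset.sum_le_sum_of_subset_of_nonneg (Finset.range_subset_range.2 hkl)
    intro i hi _
    exact hb i (lt_of_lt_of_le (Finset.mem_range.1 hi) hln)
  have hA01 : ∀ k ≤ n, 0 ≤ A k ∧ A k ≤ 1 := by
    intro k hk
    constructor
    · rw [← hA0]; exact hAmono 0 k (Nat.zero_le k) hk
    · rw [← hAn]; exact hAmono k n hk le_rfl
  have hB01 : ∀ k ≤ n, 0 ≤ B k ∧ B k ≤ 1 := by
    intro k hk
    constructor
    · rw [← hB0]; exact hBmono 0 k (Nat.zero_le k) hk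
    · rw [← hBn]; exact hBmono k n hk le_rfl
  have hne : (Finset.range n).Nonempty := Finset.nonempty_range_iff.2 hn.ne'
  set θ : ℝ := (Finset.range n).sup' hne (fun i => A (i + 1) - B i) with hθdef
  have hθ1 : ∀ j < n, A (j + 1) - B j ≤ θ := by
    intro j hj
    rw [hθdef]
    exact Finset.le_sup' (fun i => A (i + 1) - B i) (Finset.mem_range.2 hj)
  have hθ0 : 0 ≤ θ := by
    have h1 : A ((n - 1) + 1) - B (n - 1) ≤ θ := hθ1 (n - 1) (Nat.sub_lt hn Nat.one_pos)
    have h2 : (n - 1) + 1 = n := Nat.succ_pred_eq_of_pos hn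
    rw [h2] at h1
    have := (hB01 (n - 1) (Nat.sub_le n 1)).2
    linarith [hAn ▸ h1]
  have hθle1 : θ ≤ 1 := by
    rw [hθdef]
    apply Finset.sup'_le
    intro i hi
    have hi' := Finset.mem_range.1 hi
    have := (hA01 (i + 1) hi').2
    have := (hB01 i (le_of_lt hi')).1
    linarith
  have hθ2 : ∀ j < n, θ ≤ 1 + A j - B (j + 1) := by
    intro j hj
    rw [hθdef]
    apply Finset.sup'_le
    intro i hi
    have hi' := Finset.mem_range.1 hi
    rcases lt_trichotomy i j with h|h|h
    · have h1 : A (i + 1) ≤ A j := hAmono (i + 1) j h (le_of_lt hj)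
      have h2 : B (j + 1) ≤ 1 := (hB01 (j + 1) hj).2
      have h3 : 0 ≤ B i := (hB01 i (le_of_lt hi')).1
      linarith
    · subst h
      have := hab i hi'
      rw [hAstep, hBstep]; linarith
    · have h1 : B (j + 1) ≤ B i := hBmono (j + 1) i h (le_of_lt hi')
      have h2 : A (i + 1) ≤ 1 := (hA01 (i + 1) hi').2
      have h3 : 0 ≤ A j := (hA01 j (le_of_lt hj)).1
      linarith
  set g : ℕ → ℝ → ℝ := fun i x => max (A i) (min (A (i + 1)) x) with hg
  have gmono : ∀ i, ∀ x y : ℝ, x ≤ y → g i x ≤ g i y :=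
    fun i x y h => max_le_max le_rfl (min_le_min le_rfl h)
  set μ : ℕ → ℕ → ℝ := fun i j =>
    (g i (B (j + 1) + θ) - g i (B j + θ)) + (g i (B (j + 1) + θ - 1) - g i (B j + θ - 1)) with hμ
  have hBj : ∀ j < n, B j ≤ B (j + 1) := by
    intro j hj; rw [hBstep]; linarith [hb j hj]
  refine ⟨μ, ?_, ?_, ?_, ?_⟩
  · intro i _ j hj
    have h := hBj j hj
    have h1 := gmono i (B j + θ) (B (j + 1) + θ) (by linarith)
    have h2 := gmono i (B j + θ - 1) (B (j + 1) + θ - 1) (by linarith)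
    simp only [hμ]
    linarith
  · -- row sums
    intro i hi
    have split : ∑ j ∈ Finset.range n, μ i j =
        (∑ j ∈ Finset.range n, (g i (B (j + 1) + θ) - g i (B j + θ))) +
        (∑ j ∈ Finset.range n, (g i (B (j + 1) + θ - 1) - g i (B j + θ - 1))) := by
      rw [← Finset.sum_add_distrib]
    rw [split, Finset.sum_range_sub (fun j => g i (B j + θ)),
        Finset.sum_range_sub (fun j => g i (B j + θ - 1)), hB0, hBn]
    have e1 : g i (1 + θ) = A (i + 1) := by
      have h1 : A (i + 1) ≤ 1 + θ := by
        have := (hA01 (i + 1) hi).2; linarith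
      have h2 : A i ≤ A (i + 1) := hAmono i (i + 1) (Nat.le_succ i) hi
      simp only [hg]
      rw [min_eq_left h1, max_eq_right h2]
    have e2 : g i (0 + θ - 1) = A i := by
      have h1 : min (A (i + 1)) (0 + θ - 1) ≤ A i := by
        have := (hA01 i (le_of_lt hi)).1
        have := min_le_right (A (i + 1)) (0 + θ - 1)
        linarith
      simp only [hg]
      rw [max_eq_left h1]
    rw [e1, e2]
    have : (1 : ℝ) + θ - 1 = 0 + θ := by ring
    rw [this]
    rw [hAstep]
    ring
  · -- column sums
    intro j hj
    have key : ∀ i ∈ Finset.range n, μ i j =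
        ((min (A (i+1)) (max 0 (B (j + 1) + θ)) - min (A i) (max 0 (B (j + 1) + θ))) -
         (min (A (i+1)) (max 0 (B j + θ)) - min (A i) (max 0 (B j + θ)))) +
        ((min (A (i+1)) (max 0 (B (j + 1) + θ - 1)) - min (A i) (max 0 (B (j + 1) + θ - 1))) -
         (min (A (i+1)) (max 0 (B j + θ - 1)) - min (A i) (max 0 (B j + θ - 1)))) := by
      intro i hi
      have hi' := Finset.mem_range.1 hi
      have hp : 0 ≤ A i := (hA01 i (le_of_lt hi')).1
      have hpq : A i ≤ A (i + 1) := hAmono i (i + 1) (Nat.le_succ i) hi'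
      have d : ∀ x : ℝ, g i x - A i = min (A (i+1)) (max 0 x) - min (A i) (max 0 x) :=
        fun x => clamp_diff (A i) (A (i + 1)) x hp hpq
      have d1 := d (B (j + 1) + θ)
      have d2 := d (B j + θ)
      have d3 := d (B (j + 1) + θ - 1)
      have d4 := d (B j + θ - 1)
      simp only [hμ]
      linarith
    rw [Finset.sum_congr rfl key]
    have tele : ∀ y : ℝ, ∑ i ∈ Finset.range n,
        (min (A (i+1)) (max 0 y) - min (A i) (max 0 y)) = min 1 (max 0 y) := by
      intro y
      rw [Finset.sum_range_sub (fun i => min (A i) (max 0 y)), hA0, hAn,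
        min_eq_left (le_max_left 0 y), sub_zero]
    have t1 := tele (B (j+1) + θ)
    have t2 := tele (B j + θ)
    have t3 := tele (B (j+1) + θ - 1)
    have t4 := tele (B j + θ - 1)
    simp only [Finset.sum_add_distrib, Finset.sum_sub_distrib] at t1 t2 t3 t4 ⊢
    have hBj1 : B (j + 1) ≤ 1 := (hB01 (j+1) hj).2
    have hBj0 : 0 ≤ B j := (hB01 j (le_of_lt hj)).1
    have hBjm : B j ≤ B (j + 1) := by rw [hBstep]; linarith [hb j hj]
    have c1 := clamp_sum (B (j+1) + θ) (by linarith) (by linarith)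
    have c2 := clamp_sum (B j + θ) (by linarith) (by linarith)
    have := hBstep j
    linarith [t1, t2, t3, t4]
  · intro i hi
    have hAmono' : A i ≤ A (i + 1) := hAmono i (i+1) (Nat.le_succ i) hi
    have hBj' : B i ≤ B (i + 1) := by rw [hBstep]; linarith [hb i hi]
    have h1 : A (i + 1) ≤ B i + θ := by have := hθ1 i hi; linarith
    have h2 : A (i + 1) ≤ B (i + 1) + θ := by linarith
    have h3 : B (i + 1) + θ - 1 ≤ A i := by have := hθ2 i hi; linarith
    have h4 : B i + θ - 1 ≤ A i := by linarith
    have e : ∀ x : ℝ, A (i+1) ≤ x → g i x = A (i+1) := by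
      intro x hx
      simp only [hg]
      rw [min_eq_left hx, max_eq_right hAmono']
    have e' : ∀ x : ℝ, x ≤ A i → g i x = A i := by
      intro x hx
      simp only [hg]
      rw [max_eq_left (le_trans (min_le_right _ _) hx)]
    simp only [hμ]
    rw [e _ h2, e _ h1, e' _ h3, e' _ h4]
    ring

private lemma coupling_finset {L : Type*} [DecidableEq L] (S T : Finset L)
    (a b : L → ℝ)
    (ha0 : ∀ s ∈ S, 0 ≤ a s) (hb0 : ∀ t ∈ T, 0 ≤ b t)
    (hsa : ∑ s ∈ S, a s = 1) (hsb : ∑ t ∈ T, b t = 1)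
    (hab : ∀ s ∈ S ∩ T, a s + b s ≤ 1) :
    ∃ μ : L → L → ℝ,
      (∀ s ∈ S, ∀ t ∈ T, 0 ≤ μ s t) ∧
      (∀ s ∈ S, ∑ t ∈ T, μ s t = a s) ∧
      (∀ t ∈ T, ∑ s ∈ S, μ s t = b t) ∧
      (∀ s ∈ S ∩ T, μ s s = 0) := by
  classical
  set U : Finset L := S ∪ T with hU
  set n : ℕ := U.card with hn
  set φ : ↥U ≃ Fin n := U.equivFin with hφ
  set abar : L → ℝ := fun s => if s ∈ S then a s else 0 with habar
  set bbar : L → ℝ := fun t => if t ∈ T then b t else 0 with hbbar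
  set a' : ℕ → ℝ := fun i => if h : i < n then abar ((φ.symm ⟨i, h⟩ : ↥U) : L) else 0 with ha'
  set b' : ℕ → ℝ := fun i => if h : i < n then bbar ((φ.symm ⟨i, h⟩ : ↥U) : L) else 0 with hb'
  -- conversion of sums
  have conv : ∀ f : L → ℝ,
      ∑ i ∈ Finset.range n, (if h : i < n then f ((φ.symm ⟨i, h⟩ : ↥U) : L) else 0)
        = ∑ s ∈ U, f s := by
    intro f
    rw [← Fin.sum_univ_eq_sum_range (fun i => if h : i < n then f ((φ.symm ⟨i, h⟩ : ↥U) : L) else 0) n]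
    rw [← Finset.sum_coe_sort U f]
    rw [← Equiv.sum_comp φ.symm (fun x : ↥U => f (x : L))]
    apply Finset.sum_congr rfl
    intro i _
    simp
  have habar_sum : ∑ s ∈ U, abar s = 1 := by
    rw [← Finset.sum_subset (Finset.subset_union_left : S ⊆ U)
      (fun x _ hx => by simp [habar, hx])]
    rw [← hsa]
    exact Finset.sum_congr rfl (fun x hx => by simp [habar, hx])
  have hbbar_sum : ∑ t ∈ U, bbar t = 1 := by
    rw [← Finset.sum_subset (Finset.subset_union_right : T ⊆ U)
      (fun x _ hx => by simp [hbbar, hx])]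
    rw [← hsb]
    exact Finset.sum_congr rfl (fun x hx => by simp [hbbar, hx])
  have hsa' : ∑ i ∈ Finset.range n, a' i = 1 := by rw [ha']; rw [conv abar]; exact habar_sum
  have hsb' : ∑ i ∈ Finset.range n, b' i = 1 := by rw [hb']; rw [conv bbar]; exact hbbar_sum
  have habar0 : ∀ s, 0 ≤ abar s := by
    intro s; rw [habar]; dsimp only
    split_ifs with h
    · exact ha0 s h
    · exact le_refl 0
  have hbbar0 : ∀ t, 0 ≤ bbar t := by
    intro t; rw [hbbar]; dsimp only
    split_ifs with h
    · exact hb0 t h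
    · exact le_refl 0
  have ha0' : ∀ i < n, 0 ≤ a' i := by
    intro i hi; rw [ha']; dsimp only; rw [dif_pos hi]; exact habar0 _
  have hb0' : ∀ i < n, 0 ≤ b' i := by
    intro i hi; rw [hb']; dsimp only; rw [dif_pos hi]; exact hbbar0 _
  have habarle : ∀ s, abar s ≤ 1 := by
    intro s; rw [habar]; dsimp only
    split_ifs with h
    · calc a s = ∑ x ∈ {s}, a x := by rw [Finset.sum_singleton]
        _ ≤ ∑ x ∈ S, a x := Finset.sum_le_sum_of_subset_of_nonneg
            (Finset.singleton_subset_iff.2 h) (fun x hx _ => ha0 x hx)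
        _ = 1 := hsa
    · norm_num
  have hbbarle : ∀ t, bbar t ≤ 1 := by
    intro t; rw [hbbar]; dsimp only
    split_ifs with h
    · calc b t = ∑ x ∈ {t}, b x := by rw [Finset.sum_singleton]
        _ ≤ ∑ x ∈ T, b x := Finset.sum_le_sum_of_subset_of_nonneg
            (Finset.singleton_subset_iff.2 h) (fun x hx _ => hb0 x hx)
        _ = 1 := hsb
    · norm_num
  have hab' : ∀ i < n, a' i + b' i ≤ 1 := by
    intro i hi
    rw [ha', hb']; dsimp only; rw [dif_pos hi, dif_pos hi]
    set s : L := ((φ.symm ⟨i, hi⟩ : ↥U) : L) with hs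
    by_cases h1 : s ∈ S
    · by_cases h2 : s ∈ T
      · have := hab s (Finset.mem_inter.2 ⟨h1, h2⟩)
        rw [habar, hbbar]; dsimp only; rw [if_pos h1, if_pos h2]; exact this
      · have := habarle s
        have h0 : bbar s = 0 := by rw [hbbar]; dsimp only; rw [if_neg h2]
        rw [h0]; linarith
    · have := hbbarle s
      have h0 : abar s = 0 := by rw [habar]; dsimp only; rw [if_neg h1]
      rw [h0]; linarith
  obtain ⟨μ', hμnn, hμrow, hμcol, hμdiag⟩ := coupling_nat n a' b' ha0' hb0' hsa' hsb' hab'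
  set μ : L → L → ℝ := fun s t =>
    if hs : s ∈ U then if ht : t ∈ U then μ' (φ ⟨s, hs⟩) (φ ⟨t, ht⟩) else 0 else 0 with hμdef
  -- evaluation lemma
  have μeval : ∀ (s t : L) (hs : s ∈ U) (ht : t ∈ U),
      μ s t = μ' (φ ⟨s, hs⟩) (φ ⟨t, ht⟩) := by
    intro s t hs ht
    rw [hμdef]; dsimp only; rw [dif_pos hs, dif_pos ht]
  have a'eval : ∀ (s : L) (hs : s ∈ U), a' ((φ ⟨s, hs⟩ : Fin n) : ℕ) = abar s := by
    intro s hs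
    rw [ha']; dsimp only
    rw [dif_pos (φ ⟨s, hs⟩).isLt]
    congr 1
    simp
  have b'eval : ∀ (t : L) (ht : t ∈ U), b' ((φ ⟨t, ht⟩ : Fin n) : ℕ) = bbar t := by
    intro t ht
    rw [hb']; dsimp only
    rw [dif_pos (φ ⟨t, ht⟩).isLt]
    congr 1
    simp
  -- row sums over U
  have rowU : ∀ (s : L) (hs : s ∈ U), ∑ t ∈ U, μ s t = abar s := by
    intro s hs
    have h1 : ∑ t ∈ U, μ s t
        = ∑ i ∈ Finset.range n, (if h : i < n then μ s ((φ.symm ⟨i, h⟩ : ↥U) : L) else 0) :=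
      (conv (fun t => μ s t)).symm
    rw [h1]
    have h2 : ∀ i ∈ Finset.range n,
        (if h : i < n then μ s ((φ.symm ⟨i, h⟩ : ↥U) : L) else 0) = μ' (φ ⟨s, hs⟩) i := by
      intro i hi
      have hi' := Finset.mem_range.1 hi
      rw [dif_pos hi']
      have ht : ((φ.symm ⟨i, hi'⟩ : ↥U) : L) ∈ U := (φ.symm ⟨i, hi'⟩).2
      rw [μeval s _ hs ht]
      congr 1
      simp
    rw [Finset.sum_congr rfl h2, hμrow _ (φ ⟨s, hs⟩).isLt, a'eval s hs]
  -- column sums over U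
  have colU : ∀ (t : L) (ht : t ∈ U), ∑ s ∈ U, μ s t = bbar t := by
    intro t ht
    have h1 : ∑ s ∈ U, μ s t
        = ∑ i ∈ Finset.range n, (if h : i < n then μ ((φ.symm ⟨i, h⟩ : ↥U) : L) t else 0) :=
      (conv (fun s => μ s t)).symm
    rw [h1]
    have h2 : ∀ i ∈ Finset.range n,
        (if h : i < n then μ ((φ.symm ⟨i, h⟩ : ↥U) : L) t else 0) = μ' i (φ ⟨t, ht⟩) := by
      intro i hi
      have hi' := Finset.mem_range.1 hi
      rw [dif_pos hi']
      have hs : ((φ.symm ⟨i, hi'⟩ : ↥U) : L) ∈ U := (φ.symm ⟨i, hi'⟩).2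
      rw [μeval _ t hs ht]
      congr 1
      simp
    rw [Finset.sum_congr rfl h2, hμcol _ (φ ⟨t, ht⟩).isLt, b'eval t ht]
  -- entries vanish off the supports
  have nnU : ∀ (s t : L), s ∈ U → t ∈ U → 0 ≤ μ s t := by
    intro s t hs ht
    rw [μeval s t hs ht]
    exact hμnn _ (φ ⟨s, hs⟩).isLt _ (φ ⟨t, ht⟩).isLt
  have colzero : ∀ (t : L), t ∈ U → t ∉ T → ∀ s ∈ U, μ s t = 0 := by
    intro t ht ht' s hs
    have hz : ∑ s ∈ U, μ s t = 0 := by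
      rw [colU t ht, hbbar]; dsimp only; rw [if_neg ht']
    have := (Finset.sum_eq_zero_iff_of_nonneg (fun x hx => nnU x t hx ht)).1 hz
    exact this s hs
  have rowzero : ∀ (s : L), s ∈ U → s ∉ S → ∀ t ∈ U, μ s t = 0 := by
    intro s hs hs' t ht
    have hz : ∑ t ∈ U, μ s t = 0 := by
      rw [rowU s hs, habar]; dsimp only; rw [if_neg hs']
    have := (Finset.sum_eq_zero_iff_of_nonneg (fun x hx => nnU s x hs hx)).1 hz
    exact this t ht
  refine ⟨μ, ?_, ?_, ?_, ?_⟩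
  · intro s hs t ht
    exact nnU s t (Finset.mem_union_left _ hs) (Finset.mem_union_right _ ht)
  · intro s hs
    have hsU : s ∈ U := Finset.mem_union_left _ hs
    have : ∑ t ∈ T, μ s t = ∑ t ∈ U, μ s t :=
      Finset.sum_subset Finset.subset_union_right
        (fun t htU htT => colzero t htU htT s hsU)
    rw [this, rowU s hsU, habar]; dsimp only; rw [if_pos hs]
  · intro t ht
    have htU : t ∈ U := Finset.mem_union_right _ ht
    have : ∑ s ∈ S, μ s t = ∑ s ∈ U, μ s t :=
      Finset.sum_subset Finset.subset_union_left
        (fun s hsU hsS => rowzero s hsU hsS t htU)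
    rw [this, colU t htU, hbbar]; dsimp only; rw [if_pos ht]
  · intro s hs
    have hsU : s ∈ U := Finset.mem_union_left _ (Finset.mem_inter.1 hs).1
    rw [μeval s s hsU hsU]
    exact hμdiag _ (φ ⟨s, hsU⟩).isLt


/-- Part of Proposition 1 asserting that relaxation (R1) is weaker than (R2) and (R3):
every `μ` in the constrained (R2/R3) feasible set (local polytope of `(V,E)` with zero
diagonals on `E` and matching constraints) extends, by choosing pairwise marginals for the
new edges of `Ê = E ∪ {uv : u ≠ v, X_u ∩ X_v ≠ ∅}` (with marginals `μ_u, μ_v` and zero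
diagonal), to a point of the (R1) feasible set with the same objective value; consequently
the optimal value of (R1) is at most that of (R2). -/
theorem R1_weaker_than_R2 {V L : Type*} [Fintype V] [Fintype L]
    [DecidableEq V] [DecidableEq L]
    (X : V → Finset L) (hX : ∀ u, (X u).Nonempty) (E : Finset (V × V))
    (θ1 : V → L → ℝ) (θ2 : V × V → L → L → ℝ)
    (Ehat : Finset (V × V))
    (hEhat : Ehat = E ∪ Finset.univ.filter
      (fun e : V × V => e.1 ≠ e.2 ∧ (X e.1 ∩ X e.2).Nonempty))
    (θ2hat : V × V → L → L → ℝ)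
    (hθ2hat : ∀ e : V × V, θ2hat e = if e ∈ E then θ2 e else 0) :
    (∀ (μ1 : V → L → ℝ) (μ2 : V × V → L → L → ℝ),
      (LocalPolytope X E μ1 μ2 ∧
        (∀ e ∈ E, ∀ s ∈ X e.1 ∩ X e.2, μ2 e s s = 0) ∧
        (∀ s : L, ∑ u ∈ Finset.univ.filter (fun u => s ∈ X u), μ1 u s ≤ 1)) →
      ∃ μ2hat : V × V → L → L → ℝ,
        (∀ e ∈ E, μ2hat e = μ2 e) ∧
        (LocalPolytope X Ehat μ1 μ2hat ∧
          ∀ e ∈ Ehat, ∀ s ∈ X e.1 ∩ X e.2, μ2hat e s s = 0) ∧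
        LPObjective X Ehat θ1 θ2hat μ1 μ2hat = LPObjective X E θ1 θ2 μ1 μ2) ∧
    (⨅ μ ∈ {μ : (V → L → ℝ) × (V × V → L → L → ℝ) |
        LocalPolytope X Ehat μ.1 μ.2 ∧
        ∀ e ∈ Ehat, ∀ s ∈ X e.1 ∩ X e.2, μ.2 e s s = 0},
      ((LPObjective X Ehat θ1 θ2hat μ.1 μ.2 : ℝ) : EReal)) ≤
    ⨅ μ ∈ {μ : (V → L → ℝ) × (V × V → L → L → ℝ) |
        LocalPolytope X E μ.1 μ.2 ∧
        (∀ e ∈ E, ∀ s ∈ X e.1 ∩ X e.2, μ.2 e s s = 0) ∧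
        (∀ s : L, ∑ u ∈ Finset.univ.filter (fun u => s ∈ X u), μ.1 u s ≤ 1)},
      ((LPObjective X E θ1 θ2 μ.1 μ.2 : ℝ) : EReal) := by
  classical
  have hsubE : E ⊆ Ehat := by rw [hEhat]; exact Finset.subset_union_left
  have main : ∀ (μ1 : V → L → ℝ) (μ2 : V × V → L → L → ℝ),
      (LocalPolytope X E μ1 μ2 ∧
        (∀ e ∈ E, ∀ s ∈ X e.1 ∩ X e.2, μ2 e s s = 0) ∧
        (∀ s : L, ∑ u ∈ Finset.univ.filter (fun u => s ∈ X u), μ1 u s ≤ 1)) →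
      ∃ μ2hat : V × V → L → L → ℝ,
        (∀ e ∈ E, μ2hat e = μ2 e) ∧
        (LocalPolytope X Ehat μ1 μ2hat ∧
          ∀ e ∈ Ehat, ∀ s ∈ X e.1 ∩ X e.2, μ2hat e s s = 0) ∧
        LPObjective X Ehat θ1 θ2hat μ1 μ2hat = LPObjective X E θ1 θ2 μ1 μ2 := by
    rintro μ1 μ2 ⟨⟨h1, h2, h3, h4, h5, h6⟩, hdiag, hcap⟩
    have key : ∀ e : V × V, e ∈ Ehat → e ∉ E →
        ∃ m : L → L → ℝ,
          (∀ s ∈ X e.1, ∀ t ∈ X e.2, 0 ≤ m s t) ∧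
          (∀ s ∈ X e.1, ∑ t ∈ X e.2, m s t = μ1 e.1 s) ∧
          (∀ t ∈ X e.2, ∑ s ∈ X e.1, m s t = μ1 e.2 t) ∧
          (∀ s ∈ X e.1 ∩ X e.2, m s s = 0) := by
      intro e he heE
      have hne : e.1 ≠ e.2 := by
        rw [hEhat] at he
        rcases Finset.mem_union.1 he with h | h
        · exact absurd h heE
        · exact (Finset.mem_filter.1 h).2.1
      apply coupling_finset (X e.1) (X e.2) (μ1 e.1) (μ1 e.2)
        (h1 e.1) (h1 e.2) (h2 e.1) (h2 e.2)
      intro s hsint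
      obtain ⟨hs1, hs2⟩ := Finset.mem_inter.1 hsint
      have hsub : ({e.1, e.2} : Finset V) ⊆ Finset.univ.filter (fun u => s ∈ X u) := by
        intro u hu
        rcases Finset.mem_insert.1 hu with h | h
        · subst h; exact Finset.mem_filter.2 ⟨Finset.mem_univ _, hs1⟩
        · rw [Finset.mem_singleton.1 h]; exact Finset.mem_filter.2 ⟨Finset.mem_univ _, hs2⟩
      calc μ1 e.1 s + μ1 e.2 s = ∑ u ∈ ({e.1, e.2} : Finset V), μ1 u s :=
            (Finset.sum_pair (f := fun u => μ1 u s) hne).symm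
        _ ≤ ∑ u ∈ Finset.univ.filter (fun u => s ∈ X u), μ1 u s :=
            Finset.sum_le_sum_of_subset_of_nonneg hsub
              (fun u hu _ => h1 u s (Finset.mem_filter.1 hu).2)
        _ ≤ 1 := hcap s
    set μ2h : V × V → L → L → ℝ := fun e =>
      if h : e ∈ Ehat ∧ e ∉ E then Classical.choose (key e h.1 h.2) else μ2 e with hμ2h
    have heq : ∀ e ∈ E, μ2h e = μ2 e := by
      intro e he
      rw [hμ2h]; dsimp only
      rw [dif_neg (fun h => h.2 he)]
    have hnew : ∀ (e : V × V) (he : e ∈ Ehat) (heE : e ∉ E),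
        (∀ s ∈ X e.1, ∀ t ∈ X e.2, 0 ≤ μ2h e s t) ∧
        (∀ s ∈ X e.1, ∑ t ∈ X e.2, μ2h e s t = μ1 e.1 s) ∧
        (∀ t ∈ X e.2, ∑ s ∈ X e.1, μ2h e s t = μ1 e.2 t) ∧
        (∀ s ∈ X e.1 ∩ X e.2, μ2h e s s = 0) := by
      intro e he heE
      have : μ2h e = Classical.choose (key e he heE) := by
        rw [hμ2h]; dsimp only; rw [dif_pos ⟨he, heE⟩]
      rw [this]
      exact Classical.choose_spec (key e he heE)
    refine ⟨μ2h, heq, ⟨⟨h1, h2, ?_, ?_, ?_, ?_⟩, ?_⟩, ?_⟩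
    · intro e he s hs t ht
      by_cases heE : e ∈ E
      · rw [heq e heE]; exact h3 e heE s hs t ht
      · exact (hnew e he heE).1 s hs t ht
    · intro e he
      by_cases heE : e ∈ E
      · rw [heq e heE]; exact h4 e heE
      · calc ∑ s ∈ X e.1, ∑ t ∈ X e.2, μ2h e s t
            = ∑ s ∈ X e.1, μ1 e.1 s :=
              Finset.sum_congr rfl (fun s hs => (hnew e he heE).2.1 s hs)
          _ = 1 := h2 e.1
    · intro e he s hs
      by_cases heE : e ∈ E
      · rw [heq e heE]; exact h5 e heE s hs
      · exact (hnew e he heE).2.1 s hs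
    · intro e he t ht
      by_cases heE : e ∈ E
      · rw [heq e heE]; exact h6 e heE t ht
      · exact (hnew e he heE).2.2.1 t ht
    · intro e he s hs
      by_cases heE : e ∈ E
      · rw [heq e heE]; exact hdiag e heE s hs
      · exact (hnew e he heE).2.2.2 s hs
    · unfold LPObjective
      congr 1
      have step1 : ∑ e ∈ Ehat, ∑ s ∈ X e.1, ∑ t ∈ X e.2, θ2hat e s t * μ2h e s t
          = ∑ e ∈ E, ∑ s ∈ X e.1, ∑ t ∈ X e.2, θ2hat e s t * μ2h e s t := by
        symm
        apply Finset.sum_subset hsubE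
        intro e he heE
        have hz : θ2hat e = 0 := by rw [hθ2hat e, if_neg heE]
        apply Finset.sum_eq_zero
        intro s _
        apply Finset.sum_eq_zero
        intro t _
        rw [hz]
        norm_num
      rw [step1]
      apply Finset.sum_congr rfl
      intro e he
      rw [heq e he, hθ2hat e, if_pos he]
  refine ⟨main, ?_⟩
  apply le_iInf₂
  intro μ hμ
  obtain ⟨m2, hm2E, ⟨hLPhat, hdiaghat⟩, hobj⟩ := main μ.1 μ.2 hμ
  have hmem : ((μ.1, m2) : (V → L → ℝ) × (V × V → L → L → ℝ)) ∈
      {μ : (V → L → ℝ) × (V × V → L → L → ℝ) |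
        LocalPolytope X Ehat μ.1 μ.2 ∧
        ∀ e ∈ Ehat, ∀ s ∈ X e.1 ∩ X e.2, μ.2 e s s = 0} := ⟨hLPhat, hdiaghat⟩
  calc (⨅ μ ∈ {μ : (V → L → ℝ) × (V × V → L → L → ℝ) |
        LocalPolytope X Ehat μ.1 μ.2 ∧
        ∀ e ∈ Ehat, ∀ s ∈ X e.1 ∩ X e.2, μ.2 e s s = 0},
      ((LPObjective X Ehat θ1 θ2hat μ.1 μ.2 : ℝ) : EReal))
      ≤ ((LPObjective X Ehat θ1 θ2hat μ.1 m2 : ℝ) : EReal) := iInf₂_le (μ.1, m2) hmem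
    _ = ((LPObjective X E θ1 θ2 μ.1 μ.2 : ℝ) : EReal) := by rw [hobj]
end

section
/- Assume |L| = |V|. Then the optimal values of relaxations (R4) and (R5) coincide: the infimum of the common objective over the (R4) feasible set equals its infimum over the (R5) feasible set. (This is the part '(R4) = (R5)' of Proposition 1.) -/
/-- Part "(R4) = (R5)" of Proposition 1 (assuming `|L| = |V|`): the infimum of the common
objective over the (R4) feasible set (original and inverse local polytope points coupled by
`μ_u(s) = μ'_s(u)`) equals its infimum over the (R5) feasible set (which additionally
requires a point `τ` of the matching polytope `M` with `μ_u(s) = τ_u(s) = μ'_s(u)`). -/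
theorem R4_eq_R5 {V L : Type*} [Fintype V] [Fintype L]
    [DecidableEq V] [DecidableEq L]
    (hcard : Fintype.card L = Fintype.card V)
    (X : V → Finset L) (hX : ∀ u, (X u).Nonempty) (E : Finset (V × V))
    (θ1 : V → L → ℝ) (θ2 : V × V → L → L → ℝ)
    (X' : L → Finset V) (hX' : ∀ s : L, X' s = Finset.univ.filter (fun u => s ∈ X u))
    (E' : Finset (L × L))
    (hE' : ∀ e : L × L, e ∈ E' ↔ ∃ u ∈ X' e.1, ∃ v ∈ X' e.2, (u, v) ∈ E)
    (θ'1 : L → V → ℝ) (hθ'1 : ∀ (s : L) (u : V), θ'1 s u = θ1 u s)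
    (θ'2 : L × L → V → V → ℝ)
    (hθ'2 : ∀ (e : L × L) (u v : V),
      θ'2 e u v = if (u, v) ∈ E then θ2 (u, v) e.1 e.2 else 0) :
    (⨅ μ ∈ {μ : ((V → L → ℝ) × (V × V → L → L → ℝ)) ×
              ((L → V → ℝ) × (L × L → V → V → ℝ)) |
        LocalPolytope X E μ.1.1 μ.1.2 ∧
        LocalPolytope X' E' μ.2.1 μ.2.2 ∧
        (∀ u : V, ∀ s ∈ X u, μ.1.1 u s = μ.2.1 s u)},
      ((LPObjective X E θ1 θ2 μ.1.1 μ.1.2 +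
        LPObjective X' E' θ'1 θ'2 μ.2.1 μ.2.2 : ℝ) : EReal)) =
    ⨅ μ ∈ {μ : ((V → L → ℝ) × (V × V → L → L → ℝ)) ×
              ((L → V → ℝ) × (L × L → V → V → ℝ)) |
        LocalPolytope X E μ.1.1 μ.1.2 ∧
        LocalPolytope X' E' μ.2.1 μ.2.2 ∧
        ∃ τ : V → L → ℝ,
          (∀ u : V, ∀ s ∈ X u, 0 ≤ τ u s) ∧
          (∀ u : V, ∑ s ∈ X u, τ u s = 1) ∧
          (∀ s : L, ∑ u ∈ X' s, τ u s ≤ 1) ∧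
          (∀ u : V, ∀ s ∈ X u, μ.1.1 u s = τ u s ∧ μ.2.1 s u = τ u s)},
      ((LPObjective X E θ1 θ2 μ.1.1 μ.1.2 +
        LPObjective X' E' θ'1 θ'2 μ.2.1 μ.2.2 : ℝ) : EReal) := by
  have hset : {μ : ((V → L → ℝ) × (V × V → L → L → ℝ)) ×
              ((L → V → ℝ) × (L × L → V → V → ℝ)) |
        LocalPolytope X E μ.1.1 μ.1.2 ∧
        LocalPolytope X' E' μ.2.1 μ.2.2 ∧
        (∀ u : V, ∀ s ∈ X u, μ.1.1 u s = μ.2.1 s u)} =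
      {μ : ((V → L → ℝ) × (V × V → L → L → ℝ)) ×
              ((L → V → ℝ) × (L × L → V → V → ℝ)) |
        LocalPolytope X E μ.1.1 μ.1.2 ∧
        LocalPolytope X' E' μ.2.1 μ.2.2 ∧
        ∃ τ : V → L → ℝ,
          (∀ u : V, ∀ s ∈ X u, 0 ≤ τ u s) ∧
          (∀ u : V, ∑ s ∈ X u, τ u s = 1) ∧
          (∀ s : L, ∑ u ∈ X' s, τ u s ≤ 1) ∧
          (∀ u : V, ∀ s ∈ X u, μ.1.1 u s = τ u s ∧ μ.2.1 s u = τ u s)} := by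
    ext μ
    simp only [Set.mem_setOf_eq]
    constructor
    · rintro ⟨h1, h2, h3⟩
      refine ⟨h1, h2, μ.1.1, h1.1, h1.2.1, ?_, ?_⟩
      · intro s
        have hs : ∀ u ∈ X' s, μ.1.1 u s = μ.2.1 s u := by
          intro u hu
          rw [hX' s] at hu
          exact h3 u s (Finset.mem_filter.mp hu).2
        rw [Finset.sum_congr rfl hs, h2.2.1 s]
      · intro u s hs
        exact ⟨rfl, (h3 u s hs).symm⟩
    · rintro ⟨h1, h2, τ, _, _, _, hτ⟩
      refine ⟨h1, h2, fun u s hs => ?_⟩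
      rw [(hτ u s hs).1, (hτ u s hs).2]
  rw [hset]
end

section
/- Assume |L| = |V|. Let x : V → L be a bijection with x_u ∈ X_u for all u ∈ V, and let y = x⁻¹ : L → V be its inverse, so y_s ∈ X'_s for all s ∈ L. Then the energies of the original and inverse problems agree: ∑_{u∈V} θ_u(x_u) + ∑_{uv∈E} θ_{uv}(x_u,x_v) = ∑_{s∈L} θ'_s(y_s) + ∑_{st∈E'} θ'_{st}(y_s,y_t). -/
/-- With `|L| = |V|`, for a bijective labeling `x : V → L` (with `x_u ∈ X_u`) and its
inverse `y = x⁻¹`, the energy of the original graph matching problem equals the energy of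
the inverse problem, where the inverse graph has node set `L`, label sets
`X'_s = {u : s ∈ X_u}`, edge set `E' = {st : ∃ u ∈ X'_s, v ∈ X'_t, uv ∈ E}`, and inverse
potentials `θ'_s(u) = θ_u(s)`, `θ'_{st}(u,v) = θ_{uv}(s,t)` if `uv ∈ E` and `0` otherwise. -/
theorem inverse_energy_eq {V L : Type*} [Fintype V] [Fintype L]
    [DecidableEq V] [DecidableEq L]
    (hcard : Fintype.card L = Fintype.card V)
    (X : V → Finset L) (hX : ∀ u, (X u).Nonempty)
    (E : Finset (V × V))
    (θ1 : V → L → ℝ) (θ2 : V × V → L → L → ℝ)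
    (X' : L → Finset V) (hX' : ∀ s : L, X' s = Finset.univ.filter (fun u => s ∈ X u))
    (E' : Finset (L × L))
    (hE' : ∀ e : L × L, e ∈ E' ↔ ∃ u ∈ X' e.1, ∃ v ∈ X' e.2, (u, v) ∈ E)
    (x : V → L) (hx : ∀ u, x u ∈ X u) (hxbij : Function.Bijective x)
    (y : L → V) (hyx : ∀ s, x (y s) = s) (hxy : ∀ u, y (x u) = u) :
    (∑ u : V, θ1 u (x u)) + (∑ e ∈ E, θ2 e (x e.1) (x e.2)) =
    (∑ s : L, θ1 (y s) s) +
      ∑ e ∈ E', (if (y e.1, y e.2) ∈ E then θ2 (y e.1, y e.2) e.1 e.2 else 0) := by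
  have h1 : ∑ u : V, θ1 u (x u) = ∑ s : L, θ1 (y s) s := by
    rw [← Fintype.sum_bijective x hxbij (fun u => θ1 u (x u)) (fun s => θ1 (y s) s)]
    intro u; rw [hxy]
  have h2 : ∑ e ∈ E, θ2 e (x e.1) (x e.2) =
      ∑ e ∈ E', (if (y e.1, y e.2) ∈ E then θ2 (y e.1, y e.2) e.1 e.2 else 0) := by
    rw [← Finset.sum_filter]
    refine Finset.sum_nbij' (fun e => (x e.1, x e.2)) (fun e => (y e.1, y e.2)) ?_ ?_ ?_ ?_ ?_
    · intro e he
      rw [Finset.mem_filter, hE']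
      exact ⟨⟨e.1, by simp [hX', hx], e.2, by simp [hX', hx], by simpa using he⟩,
        by simpa [hxy] using he⟩
    · intro e he
      exact (Finset.mem_filter.mp he).2
    · intro e he; simp [hxy]
    · intro e he; simp [hyx]
    · intro e he; simp [hxy]
  rw [h1, h2]
end
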